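/- For a distributive lattice L, the map sending (a,b,c) to its balanced closure (a ∨ (b∧c), b ∨ (a∧c), c ∨ (a∧b)) is a closure operator on L³: it is monotone, extensive, and idempotent. -/

import Mathlib

/-! Idempotence comes down to one inequality: the meet of two coordinates of the closure is the
median `a ⊓ b ⊔ b ⊓ c ⊔ c ⊓ a` of the triple (by distributivity), which already lies below the third coordinate. -/

/-- The balanced-closure map on triples of a lattice. -/
def balancedClosure {L : Type*} [Lattice L] (t : L × L × L) : L × L × L :=
  (t.1 ⊔ t.2.1 ⊓ t.2.2, t.2.1 ⊔ t.1 ⊓ t.2.2, t.2.2 ⊔ t.1 ⊓ t.2.1)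

section Lattice

variable {L : Type*} [Lattice L]

theorem balancedClosure_monotone : Monotone (balancedClosure (L := L)) := by
  rintro ⟨a, b, c⟩ ⟨a', b', c'⟩ ⟨ha, hb, hc⟩
  exact ⟨sup_le_sup ha (inf_le_inf hb hc), sup_le_sup hb (inf_le_inf ha hc),
    sup_le_sup hc (inf_le_inf ha hb)⟩

theorem le_balancedClosure (t : L × L × L) : t ≤ balancedClosure t :=
  ⟨le_sup_left, le_sup_left, le_sup_left⟩

end Lattice

section DistribLattice

variable {L : Type*} [DistribLattice L]

theorem sup_inf_inf_sup_inf_le (x y z : L) : (y ⊔ x ⊓ z) ⊓ (z ⊔ x ⊓ y) ≤ x ⊔ y ⊓ z := by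
  rw [inf_sup_right, inf_sup_left]
  refine sup_le (sup_le le_sup_right ?_) ?_
  · exact le_sup_of_le_left (inf_le_right.trans inf_le_left)
  · exact le_sup_of_le_left (inf_le_left.trans inf_le_left)

theorem balancedClosure_balancedClosure (t : L × L × L) :
    balancedClosure (balancedClosure t) = balancedClosure t := by
  obtain ⟨a, b, c⟩ := t
  have hb := sup_inf_inf_sup_inf_le b a c
  have hc := sup_inf_inf_sup_inf_le c a b
  rw [inf_comm b a] at hb
  rw [inf_comm c a, inf_comm c b] at hc
  simp only [balancedClosure, Prod.mk.injEq]
  exact ⟨sup_eq_left.2 (sup_inf_inf_sup_inf_le a b c), sup_eq_left.2 hb, sup_eq_left.2 hc⟩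

end DistribLattice

theorem stmt1 {L : Type*} [DistribLattice L] :
    Monotone (balancedClosure (L := L)) ∧
    (∀ t : L × L × L, t ≤ balancedClosure t) ∧
    (∀ t : L × L × L, balancedClosure (balancedClosure t) = balancedClosure t) :=
  ⟨balancedClosure_monotone, le_balancedClosure, balancedClosure_balancedClosure⟩
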